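/- Let A be a semi-associative 3-algebra. For all x, y ∈ A, the left multiplication L(x,y) (defined by L(x,y)(u) = {x,y,u}) and right multiplication R(x,y) (defined by R(x,y)(u) = {u,x,y}) are derivations of the sub-adjacent 3-Lie algebra (A, [ , , ]_c), where [u,v,w]_c = {u,v,w} + {v,w,u} + {w,u,v}. -/
import Mathlib


/-- A semi-associative 3-algebra: a vector space with a trilinear multiplication
satisfying the three defining identities. -/
structure SemiAssoc3 (K : Type*) (A : Type*) [Field K] [AddCommGroup A] [Module K A] where
  m : A →ₗ[K] A →ₗ[K] A →ₗ[K] A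
  skew : ∀ x y z : A, m x y z = - m y x z
  semiAssoc : ∀ x₁ x₂ x₃ x₄ x₅ : A,
    m x₁ (m x₂ x₃ x₄) x₅ = m x₁ x₂ (m x₃ x₄ x₅)
  semi : ∀ x₁ x₂ x₃ x₄ x₅ : A,
    m x₁ (m x₂ x₃ x₄) x₅ = m x₅ (m x₂ x₃ x₄) x₁ + m x₁ (m x₅ x₃ x₄) x₂

section Aux

variable {K A : Type*} [Field K] [AddCommGroup A] [Module K A]

private lemma c1 (S : SemiAssoc3 K A) (p a b c q : A) :
    S.m p (S.m a b c) q = S.m p a (S.m b c q) := S.semiAssoc p a b c q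

private lemma c2 (S : SemiAssoc3 K A) (a b c p q : A) :
    S.m (S.m a b c) p q = - S.m p a (S.m b c q) := by
  rw [S.skew (S.m a b c) p q, S.semiAssoc p a b c q]

private lemma a1 (S : SemiAssoc3 K A) (a b c d e : A) :
    S.m a b (S.m c d e) = - S.m b a (S.m c d e) := S.skew a b _

private lemma a2 (S : SemiAssoc3 K A) (a b c d e : A) :
    S.m a b (S.m c d e) = - S.m a c (S.m b d e) := by
  rw [← S.semiAssoc a b c d e, ← S.semiAssoc a c b d e, S.skew c b d]
  simp

private lemma a3 (S : SemiAssoc3 K A) (a b c d e : A) :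
    S.m a b (S.m c d e) = - S.m a b (S.m d c e) := by
  rw [S.skew c d e]
  simp

private lemma rr (S : SemiAssoc3 K A) (a b c d e : A) :
    S.m a b (S.m c d e) = S.m e b (S.m c d a) + S.m a e (S.m c d b) := by
  rw [← S.semiAssoc a b c d e, ← S.semiAssoc e b c d a, ← S.semiAssoc a e c d b]
  exact S.semi a b c d e

end Aux

theorem stmt16 {K A : Type*} [Field K] [AddCommGroup A] [Module K A]
    (S : SemiAssoc3 K A) (x y : A) :
    let br : A → A → A → A := fun u v w => S.m u v w + S.m v w u + S.m w u v
    (∀ u v w : A, S.m x y (br u v w) =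
      br (S.m x y u) v w + br u (S.m x y v) w + br u v (S.m x y w)) ∧
    (∀ u v w : A, S.m (br u v w) x y =
      br (S.m u x y) v w + br u (S.m v x y) w + br u v (S.m w x y)) := by
  intro br
  refine ⟨fun u v w => ?_, fun u v w => ?_⟩
  · simp only [br, map_add, LinearMap.add_apply, c1, c2]
    linear_combination (norm := abel) (a2 S x y u v w) + (a3 S x y u v w) + (a1 S x y u w v) - (a2 S x y v u w) - (a1 S x y v w u) + (a3 S x y v w u) + (a3 S x y v w u) + (rr S x y v w u) + (a2 S x y w u v) - (a2 S x y w v u) - (a1 S x u y v w) + (a1 S x u y w v) + (a1 S x u v w y) - (a2 S x u v w y) + (rr S x u v w y) - (a2 S x u w v y) + (rr S x u w v y) + (a1 S x v y u w) - (a1 S x v y w u) + (rr S x v y w u) + (rr S x v u w y) - (a1 S x w y u v) + (a1 S x w y v u) + (rr S x w u v y) - (a2 S y x u w v) + (a2 S y x v w u) + (a2 S y u v w x) + (a2 S y u w v x) - (rr S y v x w u) - (a2 S u x v w y) + (a2 S u y v w x) - (a1 S u w x y v) + (rr S u w x y v)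
  · simp only [br, map_add, LinearMap.add_apply, c1, c2]
    linear_combination (norm := abel) - (a1 S x y u v w) - (a1 S x y u v w) - (a1 S x y u w v) + (a1 S x y v w u) - (a3 S x y v w u) - (a3 S x y v w u) - (a1 S x u v w y) - (a1 S x u v w y) - (a1 S x u v w y) + (a2 S x u v w y) + (a2 S x u v w y) + (a3 S x u v w y) - (rr S x u v w y) + (a2 S x u w v y) - (rr S x u w v y) - (rr S x u w v y) - (a3 S x v u w y) - (rr S x v u w y) - (rr S x w u v y) - (rr S x w u v y) + (a2 S y x u v w) + (a2 S y x u v w) + (a2 S y x u w v) - (a2 S y x v w u) - (a3 S y u x v w) - (a3 S y u x v w) + (a3 S y u x w v) + (a3 S y u x w v) + (a2 S y u v x w) + (rr S y u v x w) - (a2 S y u v w x) - (a2 S y u w x v) - (a2 S y u w v x) - (a2 S y u w v x) - (a3 S y v x w u) - (a3 S y v x w u) + (rr S y v x w u) + (rr S y v x w u) + (rr S y v x w u) + (a2 S y v w x u) + (rr S y v w x u) + (rr S y w u x v) + (a2 S u x v w y) + (a2 S u x v w y) + (a2 S u x v w y) + (a1 S u v x y w) - (rr S u v x y w) - (a1 S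 u w x y v) + (rr S u w x y v)
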